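/- arXiv:1706.09595 — 5 statements merged into one kernel-verified Lean document; each statement's English description precedes it below -/
import Mathlib

section
/- Let (X, Y, d) be an abstract decomposition datum that is unitriangular with respect to a pair (≤, Θ). Let K be a group acting on X and on Y such that d(k·χ, k·η) = d(χ, η) for all k ∈ K, χ ∈ X, η ∈ Y. Then the map Θ is K-equivariant (i.e. Θ(k·η) = k·Θ(η) for all k ∈ K and η ∈ Y) if and only if the image Θ(Y) is a K-stable subset of X. -/
/-- An injective inflationary map on a finite partial order is the identity. -/
lemma aux_infl_id {Y : Type*} [Finite Y] [PartialOrder Y] (g : Y → Y)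
    (hg : Function.Injective g) (h : ∀ y, y ≤ g y) : ∀ y, g y = y := by
  intro y
  have hmono : Monotone (fun n : ℕ => g^[n] y) := by
    apply monotone_nat_of_le_succ
    intro n
    simpa [Function.iterate_succ_apply'] using h (g^[n] y)
  obtain ⟨i, j, hij, heq⟩ := Finite.exists_ne_map_eq_of_infinite (fun n : ℕ => g^[n] y)
  wlog hlt : i < j generalizing i j
  · exact this j i hij.symm heq.symm (by omega)
  have hinj : Function.Injective (g^[i]) := Function.Injective.iterate hg i
  have hx : g^[j - i] y = y := by
    apply hinj
    have : g^[i] (g^[j-i] y) = g^[j] y := by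
      rw [← Function.iterate_add_apply]; congr 1; omega
    simp [this, heq.symm]
  have h1 : y ≤ g y := h y
  have h2 : g y ≤ y := by
    have := hmono (show 1 ≤ j - i by omega)
    simpa [hx] using this
  exact le_antisymm h2 h1

/-- Let `(X, Y, d)` be an abstract decomposition datum (finite sets `X`, `Y`
and decomposition numbers `d : X → Y → ℕ`) that is unitriangular with respect to a pair
`(≤, Θ)`: `Θ : Y → X` is injective, `d (Θ η) η = 1` for all `η`, and `d (Θ η) η' ≠ 0` implies
`η' ≤ η`.  Let `K` be a group acting on `X` and on `Y` so that `d` is `K`-invariant.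
Then `Θ` is `K`-equivariant if and only if the image `Θ(Y)` is a `K`-stable subset of `X`. -/
theorem stmt0 {X Y K : Type*} [Fintype X] [Fintype Y] [PartialOrder Y]
    [Group K] [MulAction K X] [MulAction K Y]
    (d : X → Y → ℕ) (Θ : Y → X)
    (hΘinj : Function.Injective Θ)
    (hone : ∀ η : Y, d (Θ η) η = 1)
    (htri : ∀ η η' : Y, d (Θ η) η' ≠ 0 → η' ≤ η)
    (hd : ∀ (k : K) (χ : X) (η : Y), d (k • χ) (k • η) = d χ η) :
    (∀ (k : K) (η : Y), Θ (k • η) = k • Θ η) ↔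
      (∀ (k : K) (χ : X), χ ∈ Set.range Θ → k • χ ∈ Set.range Θ) := by
  constructor
  · rintro hequi k χ ⟨η, rfl⟩
    exact ⟨k • η, hequi k η⟩
  · intro hstab k η
    -- choose f with Θ (f ξ) = k • Θ ξ
    have hex : ∀ ξ : Y, ∃ ξ' : Y, Θ ξ' = k • Θ ξ := fun ξ => by
      obtain ⟨ξ', hξ'⟩ := hstab k (Θ ξ) ⟨ξ, rfl⟩
      exact ⟨ξ', hξ'⟩
    choose f hf using hex
    have hfle : ∀ ξ : Y, k • ξ ≤ f ξ := by
      intro ξ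
      apply htri
      rw [hf, hd, hone]
      exact one_ne_zero
    set g : Y → Y := fun ξ => f (k⁻¹ • ξ) with hg
    have hginj : Function.Injective g := by
      intro a b hab
      have : Θ (f (k⁻¹ • a)) = Θ (f (k⁻¹ • b)) := congrArg Θ hab
      rw [hf, hf] at this
      have := smul_left_cancel k this
      have := hΘinj this
      exact smul_left_cancel k⁻¹ this
    have hgle : ∀ ξ : Y, ξ ≤ g ξ := by
      intro ξ
      have := hfle (k⁻¹ • ξ)
      simpa [hg] using this
    have hid := aux_infl_id g hginj hgle
    have hfη : f η = k • η := by
      have := hid (k • η)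
      simpa [hg] using this
    have := hf η
    rw [hfη] at this
    exact this
end

section
/- Let a Clifford datum be given whose datum (X̃, Ỹ, d̃) is unitriangular with respect to (≤, Θ̃), where ≤ is a linear order on Ỹ. Let η̃ ∈ Ỹ be ≤-minimal in its A'-orbit. Then for every η ∈ r_Y(η̃) there exists exactly one χ ∈ r_X(Θ̃(η̃)) with d(χ, η) ≠ 0, and for this unique χ one has d(χ, η) = 1. -/
/-- An abstract **Clifford datum**: two abstract decomposition data `(Xt, Yt, dt)` and
`(X, Y, d)`, restriction-constituent maps `rX : Xt → Finset X`, `rY : Yt → Finset Y`,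
a group `A` acting on `Xt` and `Yt` and a group `T` acting on `X` and `Y`, subject to the
axioms (a)–(e) abstracted from Clifford theory for a normal inclusion `G ⊲ G̃` with cyclic
quotient. -/
structure CliffordDatum (Xt Yt X Y A T : Type*)
    [Fintype Xt] [Fintype Yt] [Fintype X] [Fintype Y] [DecidableEq X] [DecidableEq Y]
    [Group A] [Group T] [MulAction A Xt] [MulAction A Yt]
    [MulAction T X] [MulAction T Y] where
  /-- decomposition numbers for the big group -/
  dt : Xt → Yt → ℕ
  /-- decomposition numbers for the small group -/
  d : X → Y → ℕ
  /-- constituents of the restriction of an ordinary character -/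
  rX : Xt → Finset X
  /-- constituents of the restriction of a Brauer character -/
  rY : Yt → Finset Y
  rX_nonempty : ∀ χt : Xt, (rX χt).Nonempty
  rY_nonempty : ∀ ηt : Yt, (rY ηt).Nonempty
  /-- (a) compatibility of decomposition numbers with restriction -/
  sum_d : ∀ (χt : Xt) (η : Y),
    ∑ χ ∈ rX χt, d χ η = ∑ ηt ∈ Finset.univ.filter (fun ηt : Yt => η ∈ rY ηt), dt χt ηt
  /-- (b) every element of `Y` is a constituent of some restriction -/
  cover : ∀ η : Y, ∃ ηt : Yt, η ∈ rY ηt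
  /-- (c) constituent sets meet iff the characters are in the same `A`-orbit -/
  meet_iff : ∀ ηt ηt' : Yt, (∃ η : Y, η ∈ rY ηt ∧ η ∈ rY ηt') ↔ ∃ a : A, a • ηt = ηt'
  /-- (c) the constituent set is constant on `A`-orbits -/
  rY_smul : ∀ (a : A) (ηt : Yt), rY (a • ηt) = rY ηt
  /-- (d) `d` is `T`-invariant -/
  d_inv : ∀ (t : T) (χ : X) (η : Y), d (t • χ) (t • η) = d χ η
  /-- (e) each `rX χt` is a single `T`-orbit -/
  rX_orbit : ∀ χt : Xt, ∀ χ ∈ rX χt, ∀ χ' : X, χ' ∈ rX χt ↔ ∃ t : T, t • χ = χ'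
  /-- (e) each `rY ηt` is a single `T`-orbit -/
  rY_orbit : ∀ ηt : Yt, ∀ η ∈ rY ηt, ∀ η' : Y, η' ∈ rY ηt ↔ ∃ t : T, t • η = η'

/-- Given a Clifford datum whose datum `(Xt, Yt, dt)` is unitriangular with
respect to `(≤, Θt)` for a linear order `≤` on `Yt`, and `ηt ∈ Yt` which is `≤`-minimal in its
`A`-orbit, every `η ∈ rY ηt` admits exactly one `χ ∈ rX (Θt ηt)` with `d χ η ≠ 0`, and for
this unique `χ` one has `d χ η = 1`. -/
theorem stmt1 {Xt Yt X Y A T : Type*}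
    [Fintype Xt] [Fintype Yt] [Fintype X] [Fintype Y] [DecidableEq X] [DecidableEq Y]
    [Group A] [Group T] [MulAction A Xt] [MulAction A Yt]
    [MulAction T X] [MulAction T Y] [LinearOrder Yt]
    (cd : CliffordDatum Xt Yt X Y A T)
    (Θt : Yt → Xt) (hΘinj : Function.Injective Θt)
    (hone : ∀ ηt : Yt, cd.dt (Θt ηt) ηt = 1)
    (htri : ∀ ηt ηt' : Yt, cd.dt (Θt ηt) ηt' ≠ 0 → ηt' ≤ ηt)
    (ηt : Yt) (hmin : ∀ a : A, ηt ≤ a • ηt) :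
    ∀ η ∈ cd.rY ηt, ∃ χ ∈ cd.rX (Θt ηt), cd.d χ η = 1 ∧
      ∀ χ' ∈ cd.rX (Θt ηt), cd.d χ' η ≠ 0 → χ' = χ := by
  intro η hη
  have hsum : ∑ χ ∈ cd.rX (Θt ηt), cd.d χ η = 1 := by
    rw [cd.sum_d]
    rw [Finset.sum_eq_single ηt]
    · exact hone ηt
    · intro ηt' hmem hne
      by_contra h
      have hle := htri ηt ηt' h
      have hex : ∃ a : A, a • ηt = ηt' := by
        rw [← cd.meet_iff]
        exact ⟨η, hη, (Finset.mem_filter.mp hmem).2⟩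
      obtain ⟨a, ha⟩ := hex
      exact hne (le_antisymm hle (ha ▸ hmin a))
    · intro h
      exact absurd (Finset.mem_filter.mpr ⟨Finset.mem_univ ηt, hη⟩) h
  have hex : ∃ χ ∈ cd.rX (Θt ηt), cd.d χ η ≠ 0 := by
    by_contra h
    push_neg at h
    rw [Finset.sum_eq_zero h] at hsum
    omega
  obtain ⟨χ, hχ, hne⟩ := hex
  have h1 : cd.d χ η = 1 := by
    have hle : cd.d χ η ≤ 1 :=
      hsum ▸ Finset.single_le_sum (f := fun x => cd.d x η) (fun _ _ => Nat.zero_le _) hχ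
    omega
  refine ⟨χ, hχ, h1, ?_⟩
  intro χ' hχ' hne'
  by_contra hne2
  have heq := (Finset.add_sum_erase _ (fun x => cd.d x η) hχ).symm
  have h2 : cd.d χ' η ≤ ∑ x ∈ (cd.rX (Θt ηt)).erase χ, cd.d x η :=
    Finset.single_le_sum (f := fun x => cd.d x η) (fun _ _ => Nat.zero_le _) (Finset.mem_erase.mpr ⟨hne2, hχ'⟩)
  omega
end

section
/- Let a Clifford datum be given whose datum (X̃, Ỹ, d̃) is unitriangular with respect to (≤, Θ̃), where ≤ is a linear order on Ỹ. Let R̃ ⊆ Ỹ consist of the ≤-minimal element of each A'-orbit in Ỹ. Assume hypothesis (H): |r_Y(η̃)| = |r_X(Θ̃(η̃))| for every η̃ ∈ Ỹ. Define a relation ≤_G on Y by: η ≤_G η' if and only if η = η', or there exist η̃, η̃' ∈ R̃ with η̃ < η̃', η ∈ r_Y(η̃) and η' ∈ r_Y(η̃'). Then ≤_G is a partial order on Y and there exists a T-equivariant injective map Θ : Y → X such that (X, Y, d) is unitriangular with respect to (≤_G, Θ), and such that Θ maps r_Y(η̃) bijectively onto r_X(Θ̃(η̃)) for every η̃ ∈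 R̃. -/
/-- abstract form of Theorem 2.7 of the paper.  Given a Clifford datum whose
datum `(Xt, Yt, dt)` is unitriangular with respect to `(≤, Θt)` for a linear order `≤` on `Yt`,
assume hypothesis (H): `|rY ηt| = |rX (Θt ηt)|` for every `ηt`.  Define `η ≤_G η'` iff `η = η'`
or there are `ηt < ηt'`, both `≤`-minimal in their `A`-orbits, with `η ∈ rY ηt` and
`η' ∈ rY ηt'`.  Then `≤_G` is a partial order on `Y` and there is a `T`-equivariant injection
`Θ : Y → X` making `(X, Y, d)` unitriangular with respect to `(≤_G, Θ)`, and mapping `rY ηt`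
bijectively onto `rX (Θt ηt)` for every `≤`-minimal representative `ηt`. -/
theorem stmt2 {Xt Yt X Y A T : Type*}
    [Fintype Xt] [Fintype Yt] [Fintype X] [Fintype Y] [DecidableEq X] [DecidableEq Y]
    [Group A] [Group T] [MulAction A Xt] [MulAction A Yt]
    [MulAction T X] [MulAction T Y] [LinearOrder Yt]
    (cd : CliffordDatum Xt Yt X Y A T)
    (Θt : Yt → Xt) (hΘinj : Function.Injective Θt)
    (hone : ∀ ηt : Yt, cd.dt (Θt ηt) ηt = 1)
    (htri : ∀ ηt ηt' : Yt, cd.dt (Θt ηt) ηt' ≠ 0 → ηt' ≤ ηt)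
    (H : ∀ ηt : Yt, (cd.rY ηt).card = (cd.rX (Θt ηt)).card)
    (leG : Y → Y → Prop)
    (hleG : ∀ η η' : Y, leG η η' ↔ (η = η' ∨ ∃ ηt ηt' : Yt,
      (∀ a : A, ηt ≤ a • ηt) ∧ (∀ a : A, ηt' ≤ a • ηt') ∧ ηt < ηt' ∧
        η ∈ cd.rY ηt ∧ η' ∈ cd.rY ηt')) :
    IsPartialOrder Y leG ∧
      ∃ Θ : Y → X, Function.Injective Θ ∧
        (∀ (t : T) (η : Y), Θ (t • η) = t • Θ η) ∧
        (∀ η : Y, cd.d (Θ η) η = 1) ∧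
        (∀ η η' : Y, cd.d (Θ η) η' ≠ 0 → leG η' η) ∧
        (∀ ηt : Yt, (∀ a : A, ηt ≤ a • ηt) →
          Set.BijOn Θ (cd.rY ηt : Set Y) (cd.rX (Θt ηt) : Set X)) := by
  classical
  -- Step 1: the minimal representative `m η` of the `A`-orbit of characters above `η`.
  have hmex : ∀ η : Y, ∃ ηt : Yt, η ∈ cd.rY ηt ∧ ∀ a : A, ηt ≤ a • ηt := by
    intro η
    obtain ⟨ηt0, h0⟩ := cd.cover η
    set s : Finset Yt := Finset.univ.filter (fun ηt => η ∈ cd.rY ηt) with hs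
    have hne : s.Nonempty := ⟨ηt0, by simp [hs, h0]⟩
    have hmem : ∀ ηt : Yt, ηt ∈ s ↔ η ∈ cd.rY ηt := by intro ηt; simp [hs]
    refine ⟨s.min' hne, (hmem _).1 (s.min'_mem hne), ?_⟩
    intro a
    apply Finset.min'_le
    rw [hmem, cd.rY_smul]
    exact (hmem _).1 (s.min'_mem hne)
  choose m hmY hmMin using hmex
  -- uniqueness of minimal representative
  have hmuniq : ∀ (η : Y) (ηt : Yt), η ∈ cd.rY ηt → (∀ a : A, ηt ≤ a • ηt) → ηt = m η := by
    intro η ηt h hmin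
    obtain ⟨a, ha⟩ := (cd.meet_iff ηt (m η)).1 ⟨η, h, hmY η⟩
    obtain ⟨b, hb⟩ := (cd.meet_iff (m η) ηt).1 ⟨η, hmY η, h⟩
    exact le_antisymm (ha ▸ hmin a) (hb ▸ hmMin η b)
  have hmle : ∀ (η : Y) (ηt : Yt), η ∈ cd.rY ηt → m η ≤ ηt := by
    intro η ηt h
    obtain ⟨a, ha⟩ := (cd.meet_iff (m η) ηt).1 ⟨η, hmY η, h⟩
    exact ha ▸ hmMin η a
  -- Step 2: the key sum formula
  have hsum : ∀ η : Y, ∑ χ ∈ cd.rX (Θt (m η)), cd.d χ η = 1 := by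
    intro η
    rw [cd.sum_d]
    rw [Finset.sum_eq_single_of_mem (m η) (by simp [hmY η])]
    · exact hone (m η)
    · intro b hb hne
      by_contra hβ
      simp only [Finset.mem_filter] at hb
      exact hne (le_antisymm (htri (m η) b hβ) (hmle η b hb.2))
  have hexists : ∀ η : Y, ∃ χ : X, χ ∈ cd.rX (Θt (m η)) ∧ cd.d χ η ≠ 0 := by
    intro η
    obtain ⟨χ, hχ, hd⟩ := Finset.exists_ne_zero_of_sum_ne_zero
      (by rw [hsum η]; exact one_ne_zero)
    exact ⟨χ, hχ, hd⟩
  choose Θ hΘmem hΘne using hexists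
  have hΘ1 : ∀ η : Y, cd.d (Θ η) η = 1 := by
    intro η
    have le1 : cd.d (Θ η) η ≤ 1 := by
      rw [← hsum η]
      exact Finset.single_le_sum (f := fun χ => cd.d χ η) (fun _ _ => Nat.zero_le _) (hΘmem η)
    have := hΘne η
    omega
  have hΘuniq : ∀ (η : Y) (χ : X), χ ∈ cd.rX (Θt (m η)) → cd.d χ η ≠ 0 → χ = Θ η := by
    intro η χ hχ hd
    by_contra hne
    have hsub : ({χ, Θ η} : Finset X) ⊆ cd.rX (Θt (m η)) := by
      intro x hx
      simp only [Finset.mem_insert, Finset.mem_singleton] at hx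
      rcases hx with rfl | rfl
      · exact hχ
      · exact hΘmem η
    have h2 : ∑ x ∈ ({χ, Θ η} : Finset X), cd.d x η ≤ 1 := by
      rw [← hsum η]
      exact Finset.sum_le_sum_of_subset hsub
    rw [Finset.sum_pair hne] at h2
    have := hΘ1 η
    omega
  -- Step 3: the key triangularity estimate
  have key2 : ∀ (ηt' : Yt) (η : Y) (χ : X), χ ∈ cd.rX (Θt ηt') → cd.d χ η ≠ 0 → m η ≤ ηt' := by
    intro ηt' η χ hχ hd
    have hsumne : ∑ χ' ∈ cd.rX (Θt ηt'), cd.d χ' η ≠ 0 := by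
      intro h0
      exact hd (Finset.sum_eq_zero_iff.1 h0 χ hχ)
    rw [cd.sum_d] at hsumne
    obtain ⟨b, hb, hdt⟩ := Finset.exists_ne_zero_of_sum_ne_zero hsumne
    simp only [Finset.mem_filter] at hb
    exact le_trans (hmle η b hb.2) (htri ηt' b hdt)
  -- Step 4: T-equivariance
  have hrYT : ∀ (ηt : Yt) (t : T) (η : Y), η ∈ cd.rY ηt → t • η ∈ cd.rY ηt := by
    intro ηt t η h
    exact (cd.rY_orbit ηt η h (t • η)).2 ⟨t, rfl⟩
  have hrXT : ∀ (χt : Xt) (t : T) (χ : X), χ ∈ cd.rX χt → t • χ ∈ cd.rX χt := by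
    intro χt t χ h
    exact (cd.rX_orbit χt χ h (t • χ)).2 ⟨t, rfl⟩
  have hmT : ∀ (t : T) (η : Y), m (t • η) = m η := by
    intro t η
    exact (hmuniq (t • η) (m η) (hrYT _ t _ (hmY η)) (hmMin η)).symm
  have hΘT : ∀ (t : T) (η : Y), Θ (t • η) = t • Θ η := by
    intro t η
    refine (hΘuniq (t • η) (t • Θ η) ?_ ?_).symm
    · rw [hmT]
      exact hrXT _ t _ (hΘmem η)
    · rw [cd.d_inv]
      rw [hΘ1 η]
      exact one_ne_zero
  -- Step 5: for a minimal ηt, m is constant = ηt on rY ηt, and Θ is a bijection there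
  have hmconst : ∀ (ηt : Yt), (∀ a : A, ηt ≤ a • ηt) → ∀ η ∈ cd.rY ηt, m η = ηt := by
    intro ηt hmin η hη
    exact (hmuniq η ηt hη hmin).symm
  have hmaps : ∀ (ηt : Yt), (∀ a : A, ηt ≤ a • ηt) → ∀ η ∈ cd.rY ηt, Θ η ∈ cd.rX (Θt ηt) := by
    intro ηt hmin η hη
    have := hΘmem η
    rwa [hmconst ηt hmin η hη] at this
  have hsurj : ∀ (ηt : Yt), (∀ a : A, ηt ≤ a • ηt) →
      ∀ χ ∈ cd.rX (Θt ηt), ∃ η ∈ cd.rY ηt, Θ η = χ := by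
    intro ηt hmin χ hχ
    obtain ⟨η0, hη0⟩ := cd.rY_nonempty ηt
    have hΘ0 : Θ η0 ∈ cd.rX (Θt ηt) := hmaps ηt hmin η0 hη0
    obtain ⟨t, ht⟩ := (cd.rX_orbit (Θt ηt) (Θ η0) hΘ0 χ).1 hχ
    exact ⟨t • η0, hrYT ηt t η0 hη0, by rw [hΘT, ht]⟩
  have himg : ∀ (ηt : Yt), (∀ a : A, ηt ≤ a • ηt) →
      (cd.rY ηt).image Θ = cd.rX (Θt ηt) := by
    intro ηt hmin
    apply Finset.Subset.antisymm
    · intro χ hχ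
      obtain ⟨η, hη, rfl⟩ := Finset.mem_image.1 hχ
      exact hmaps ηt hmin η hη
    · intro χ hχ
      obtain ⟨η, hη, hΘη⟩ := hsurj ηt hmin χ hχ
      exact Finset.mem_image.2 ⟨η, hη, hΘη⟩
  have hinjOn : ∀ (ηt : Yt), (∀ a : A, ηt ≤ a • ηt) → Set.InjOn Θ (cd.rY ηt : Set Y) := by
    intro ηt hmin
    rw [← Finset.card_image_iff, himg ηt hmin, ← H ηt]
  -- Step 6: global injectivity
  have hΘinj' : Function.Injective Θ := by
    intro η η' heq
    have h1 : m η ≤ m η' := key2 (m η') η (Θ η) (heq ▸ hΘmem η') (by rw [hΘ1]; exact one_ne_zero)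
    have h2 : m η' ≤ m η := key2 (m η) η' (Θ η') (heq ▸ hΘmem η) (by rw [hΘ1]; exact one_ne_zero)
    have hmeq : m η = m η' := le_antisymm h1 h2
    have hη : η ∈ cd.rY (m η) := hmY η
    have hη' : η' ∈ cd.rY (m η) := hmeq ▸ hmY η'
    exact hinjOn (m η) (hmMin η) hη hη' heq
  -- Step 7: triangularity
  have htriG : ∀ η η' : Y, cd.d (Θ η) η' ≠ 0 → leG η' η := by
    intro η η' hd
    have hle : m η' ≤ m η := key2 (m η) η' (Θ η) (hΘmem η) hd
    rcases eq_or_lt_of_le hle with heq | hlt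
    · have hΘη : Θ η ∈ cd.rX (Θt (m η')) := heq ▸ hΘmem η
      have : Θ η = Θ η' := hΘuniq η' (Θ η) hΘη hd
      rw [hleG]
      exact Or.inl (hΘinj' this).symm
    · rw [hleG]
      exact Or.inr ⟨m η', m η, hmMin η', hmMin η, hlt, hmY η', hmY η⟩
  -- Step 8: leG is a partial order
  have hpartial : IsPartialOrder Y leG := by
    refine { refl := ?_, trans := ?_, antisymm := ?_ }
    · intro η; rw [hleG]; exact Or.inl rfl
    · intro η η' η'' h1 h2
      rw [hleG] at h1 h2 ⊢
      rcases h1 with rfl | ⟨ηt, ηt', hmin1, hmin1', hlt1, hη1, hη1'⟩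
      · exact h2
      rcases h2 with rfl | ⟨σt, σt', hmin2, hmin2', hlt2, hη2, hη2'⟩
      · exact Or.inr ⟨ηt, ηt', hmin1, hmin1', hlt1, hη1, hη1'⟩
      have heq : ηt' = σt := by
        rw [hmuniq η' ηt' hη1' hmin1', hmuniq η' σt hη2 hmin2]
      exact Or.inr ⟨ηt, σt', hmin1, hmin2', lt_trans (heq ▸ hlt1) hlt2, hη1, hη2'⟩
    · intro η η' h1 h2
      rw [hleG] at h1 h2
      rcases h1 with rfl | ⟨ηt, ηt', hmin1, hmin1', hlt1, hη1, hη1'⟩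
      · rfl
      rcases h2 with rfl | ⟨σt, σt', hmin2, hmin2', hlt2, hη2, hη2'⟩
      · rfl
      exfalso
      have heq1 : ηt' = σt := by
        rw [hmuniq η' ηt' hη1' hmin1', hmuniq η' σt hη2 hmin2]
      have heq2 : σt' = ηt := by
        rw [hmuniq η σt' hη2' hmin2', hmuniq η ηt hη1 hmin1]
      rw [heq1] at hlt1
      rw [heq2] at hlt2
      exact absurd (lt_trans hlt1 hlt2) (lt_irrefl ηt)
  -- Conclusion
  refine ⟨hpartial, Θ, hΘinj', hΘT, hΘ1, htriG, ?_⟩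
  intro ηt hmin
  refine ⟨?_, hinjOn ηt hmin, ?_⟩
  · intro η hη
    exact hmaps ηt hmin η hη
  · intro χ hχ
    obtain ⟨η, hη, hΘη⟩ := hsurj ηt hmin χ hχ
    exact ⟨η, hη, hΘη⟩
end

section
/- Let a Clifford datum be given whose datum (X̃, Ỹ, d̃) is unitriangular with respect to (≤, Θ̃), where ≤ is a linear order on Ỹ. Then for every η̃ ∈ Ỹ that is ≤-minimal in its A'-orbit, the cardinality of r_X(Θ̃(η̃)) divides the cardinality of r_Y(η̃). -/
/-- abstract form of Remark 2.8 of the paper.  Given a Clifford datum whose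
datum `(Xt, Yt, dt)` is unitriangular with respect to `(≤, Θt)` for a linear order `≤` on `Yt`,
for every `ηt ∈ Yt` that is `≤`-minimal in its `A`-orbit, the cardinality of `rX (Θt ηt)`
divides the cardinality of `rY ηt`. -/
theorem stmt3 {Xt Yt X Y A T : Type*}
    [Fintype Xt] [Fintype Yt] [Fintype X] [Fintype Y] [DecidableEq X] [DecidableEq Y]
    [Group A] [Group T] [MulAction A Xt] [MulAction A Yt]
    [MulAction T X] [MulAction T Y] [LinearOrder Yt]
    (cd : CliffordDatum Xt Yt X Y A T)
    (Θt : Yt → Xt) (hΘinj : Function.Injective Θt)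
    (hone : ∀ ηt : Yt, cd.dt (Θt ηt) ηt = 1)
    (htri : ∀ ηt ηt' : Yt, cd.dt (Θt ηt) ηt' ≠ 0 → ηt' ≤ ηt)
    (ηt : Yt) (hmin : ∀ a : A, ηt ≤ a • ηt) :
    (cd.rX (Θt ηt)).card ∣ (cd.rY ηt).card := by
  classical
  -- Step 1: for every η ∈ rY ηt, the column sum over rX (Θt ηt) is 1.
  have key : ∀ η ∈ cd.rY ηt, ∑ χ ∈ cd.rX (Θt ηt), cd.d χ η = 1 := by
    intro η hη
    rw [cd.sum_d]
    rw [Finset.sum_eq_single ηt]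
    · exact hone ηt
    · intro b hb hbne
      simp only [Finset.mem_filter] at hb
      by_contra h0
      have hb_le : b ≤ ηt := htri ηt b h0
      obtain ⟨a, ha⟩ := (cd.meet_iff ηt b).mp ⟨η, hη, hb.2⟩
      have : ηt ≤ b := ha ▸ hmin a
      exact hbne (le_antisymm hb_le this)
    · intro h
      exact (h (Finset.mem_filter.mpr ⟨Finset.mem_univ ηt, hη⟩)).elim
  -- Step 2: total sum equals |rY ηt|.
  have total : ∑ χ ∈ cd.rX (Θt ηt), ∑ η ∈ cd.rY ηt, cd.d χ η = (cd.rY ηt).card := by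
    rw [Finset.sum_comm]
    rw [Finset.sum_congr rfl key]
    simp
  -- Step 3: T maps rY ηt into itself, and the row sums are constant on rX.
  have hstab : ∀ (t : T), ∀ η ∈ cd.rY ηt, t • η ∈ cd.rY ηt := by
    intro t η hη
    exact (cd.rY_orbit ηt η hη (t • η)).mpr ⟨t, rfl⟩
  obtain ⟨χ₀, hχ₀⟩ := cd.rX_nonempty (Θt ηt)
  have rowconst : ∀ χ ∈ cd.rX (Θt ηt),
      ∑ η ∈ cd.rY ηt, cd.d χ η = ∑ η ∈ cd.rY ηt, cd.d χ₀ η := by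
    intro χ hχ
    obtain ⟨t, ht⟩ := (cd.rX_orbit (Θt ηt) χ₀ hχ₀ χ).mp hχ
    subst ht
    refine Finset.sum_bij' (fun η _ => t⁻¹ • η) (fun η _ => t • η) ?_ ?_ ?_ ?_ ?_
    · intro η hη; exact hstab t⁻¹ η hη
    · intro η hη; exact hstab t η hη
    · intro η _; simp
    · intro η _; simp
    · intro η hη
      have := cd.d_inv t χ₀ (t⁻¹ • η)
      simpa using this
  -- conclude
  have : (cd.rX (Θt ηt)).card * (∑ η ∈ cd.rY ηt, cd.d χ₀ η) = (cd.rY ηt).card := by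
    rw [← total, Finset.sum_congr rfl rowconst, Finset.sum_const, smul_eq_mul]
  exact ⟨_, this.symm⟩
end

section
/- Let a Clifford datum be given whose datum (X̃, Ỹ, d̃) is unitriangular with respect to (≤, Θ̃), where ≤ is a linear order on Ỹ. Let Â be a group acting on X̃ and on Ỹ, containing A' as a normal subgroup (acting as in the Clifford datum) and containing a subgroup O with Â = A'·O, and let O also act on X and on Y. Assume: d̃(â·χ̃, â·η̃) = d̃(χ̃, η̃) for all â ∈ Â; the order ≤ on Ỹ is Â-invariant; the image Θ̃(Ỹ) is Â-stable; d(F₀·χ, F₀·η) = d(χ, η) for all F₀ ∈ O, χ ∈ X, η ∈ Y; and r_X((a·F₀)·χ̃) = F₀·r_X(χ̃) and r_Y((a·F₀)·η̃) = F₀·r_Y(η̃) for all a ∈ A' and F₀ ∈ O. Define κ(χ̃) = |r_X(χ̃)| and κ'(η̃) = |r_Y(η̃)|, and say that χ̃ ∈ Θ̃(Ỹ) is O-replaceable by χ̃' ∈ X̃ if χ̃ is κ-replaceable by χ̃' and the stabilizer of χ̃ in Â equals the stabilizer of χ̃' in Â. Assume that every element of Θ̃(Ỹ) is O-replaceable by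 some element of X̃. Then there exist a partial order ≤_G on Y and an injective map Θ : Y → X, equivariant for both the T-action and the O-action, such that (X, Y, d) is unitriangular with respect to (≤_G, Θ); in particular the image Θ(Y) is stable under both T and O. -/
/-- `η` is the unique `≤`-maximal element of the set `S`. -/
def IsUniqueMaxIn {Yt : Type*} [PartialOrder Yt] (S : Set Yt) (η : Yt) : Prop :=
  η ∈ S ∧ (∀ η' ∈ S, ¬ η < η') ∧ ∀ η' ∈ S, (∀ μ ∈ S, ¬ η' < μ) → η' = η

/-- For an abstract decomposition datum `(Xt, Yt, dt)` unitriangular with respect to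
`(≤, Θt)`, the element `χ ∈ Θt(Yt)` is `κ`-**replaceable** by `χ'` if the set
`{η' | dt χ' η' ≠ 0}` has a unique `≤`-maximal element, that element is `Θt⁻¹ χ`,
`dt χ' (Θt⁻¹ χ) = 1`, and moreover `κ χ' = κ' (Θt⁻¹ χ)`. -/
def KappaReplaceable {Xt Yt : Type*} [PartialOrder Yt] (dt : Xt → Yt → ℕ)
    (Θt : Yt → Xt) (κ : Xt → ℕ) (κ' : Yt → ℕ) (χ χ' : Xt) : Prop :=
  ∃ η : Yt, Θt η = χ ∧ IsUniqueMaxIn {η' : Yt | dt χ' η' ≠ 0} η ∧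
    dt χ' η = 1 ∧ κ χ' = κ' η

private lemma sum_nat_eq_one {α : Type*} [DecidableEq α] {s : Finset α} {f : α → ℕ}
    (h : ∑ x ∈ s, f x = 1) :
    ∃ a ∈ s, f a = 1 ∧ ∀ b ∈ s, b ≠ a → f b = 0 := by
  have hne : ∃ a ∈ s, f a ≠ 0 := by
    by_contra hc
    push_neg at hc
    rw [Finset.sum_eq_zero hc] at h
    exact one_ne_zero h.symm
  obtain ⟨a, ha, hfa⟩ := hne
  have h1 : f a ≤ 1 := h ▸ Finset.single_le_sum (fun _ _ => Nat.zero_le _) ha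
  have hfa1 : f a = 1 := le_antisymm h1 (Nat.one_le_iff_ne_zero.mpr hfa)
  have hz : ∑ x ∈ s.erase a, f x = 0 := by
    have h2 := Finset.add_sum_erase s f ha
    omega
  exact ⟨a, ha, hfa1, fun b hb hba =>
    Finset.sum_eq_zero_iff.mp hz b (Finset.mem_erase.mpr ⟨hba, hb⟩)⟩

/-- abstract form of Theorem 2.14 of the paper.  Let a Clifford datum be
given, unitriangular with respect to `(≤, Θt)` for a linear order `≤` on `Yt`.  Let `Ahat` be
a group acting on `Xt` and `Yt`, receiving `A` as a normal subgroup (via `ιA`, compatibly with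
the actions of the Clifford datum) and a subgroup `O` (via `ιO`, where the abstract group `Og`
also acts on `X` and `Y`), with `Ahat = A·O`.  Assume `dt` and `≤` are `Ahat`-invariant, the
image of `Θt` is `Ahat`-stable, `d` is `Og`-invariant, and `rX`, `rY` are equivariant for the
`Ahat`- and `Og`-actions.  If every element of `Θt(Yt)` is `O`-replaceable (κ-replaceable for
`κ = |rX ·|`, `κ' = |rY ·|`, with equal `Ahat`-stabilizers), then there are a partial order
`≤_G` on `Y` and an injection `Θ : Y → X`, equivariant for both `T` and `Og`, making
`(X, Y, d)` unitriangular with respect to `(≤_G, Θ)`; in particular the image of `Θ` is stable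
under both `T` and `Og`. -/
theorem stmt6 {Xt Yt X Y A T Ahat Og : Type*}
    [Fintype Xt] [Fintype Yt] [Fintype X] [Fintype Y] [DecidableEq X] [DecidableEq Y]
    [Group A] [Group T] [MulAction A Xt] [MulAction A Yt]
    [MulAction T X] [MulAction T Y] [LinearOrder Yt]
    [Group Ahat] [MulAction Ahat Xt] [MulAction Ahat Yt]
    [Group Og] [MulAction Og X] [MulAction Og Y]
    (cd : CliffordDatum Xt Yt X Y A T)
    (Θt : Yt → Xt) (hΘinj : Function.Injective Θt)
    (hone : ∀ ηt : Yt, cd.dt (Θt ηt) ηt = 1)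
    (htri : ∀ ηt ηt' : Yt, cd.dt (Θt ηt) ηt' ≠ 0 → ηt' ≤ ηt)
    (ιA : A →* Ahat) (ιO : Og →* Ahat) (hιO : Function.Injective ιO)
    (hAnormal : ιA.range.Normal)
    (hgen : ∀ ahat : Ahat, ∃ (a : A) (o : Og), ahat = ιA a * ιO o)
    (hcompatX : ∀ (a : A) (χt : Xt), ιA a • χt = a • χt)
    (hcompatY : ∀ (a : A) (ηt : Yt), ιA a • ηt = a • ηt)
    (hdt_inv : ∀ (ahat : Ahat) (χt : Xt) (ηt : Yt), cd.dt (ahat • χt) (ahat • ηt) = cd.dt χt ηt)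
    (hle_inv : ∀ (ahat : Ahat) (ηt μt : Yt), ahat • ηt ≤ ahat • μt ↔ ηt ≤ μt)
    (him : ∀ (ahat : Ahat) (χt : Xt), χt ∈ Set.range Θt → ahat • χt ∈ Set.range Θt)
    (hd_O : ∀ (o : Og) (χ : X) (η : Y), cd.d (o • χ) (o • η) = cd.d χ η)
    (hrX_equiv : ∀ (a : A) (o : Og) (χt : Xt),
      cd.rX ((ιA a * ιO o) • χt) = (cd.rX χt).image (fun χ => o • χ))
    (hrY_equiv : ∀ (a : A) (o : Og) (ηt : Yt),
      cd.rY ((ιA a * ιO o) • ηt) = (cd.rY ηt).image (fun η => o • η))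
    (hrepl : ∀ ηt : Yt, ∃ χ' : Xt,
      KappaReplaceable cd.dt Θt (fun χt => (cd.rX χt).card) (fun μt => (cd.rY μt).card)
        (Θt ηt) χ' ∧
      MulAction.stabilizer Ahat (Θt ηt) = MulAction.stabilizer Ahat χ') :
    ∃ (leG : Y → Y → Prop) (Θ : Y → X), IsPartialOrder Y leG ∧
      Function.Injective Θ ∧
      (∀ (t : T) (η : Y), Θ (t • η) = t • Θ η) ∧
      (∀ (o : Og) (η : Y), Θ (o • η) = o • Θ η) ∧
      (∀ η : Y, cd.d (Θ η) η = 1) ∧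
      (∀ η η' : Y, cd.d (Θ η) η' ≠ 0 → leG η' η) ∧
      (∀ (t : T), ∀ χ ∈ Set.range Θ, t • χ ∈ Set.range Θ) ∧
      (∀ (o : Og), ∀ χ ∈ Set.range Θ, o • χ ∈ Set.range Θ) := by
  classical
  -- Θt is Ahat-equivariant onto its image
  have hΘeq : ∀ (g : Ahat) (ηt : Yt), g • Θt ηt = Θt (g • ηt) := by
    intro g ηt
    obtain ⟨μ, hμ⟩ := him g (Θt ηt) ⟨ηt, rfl⟩
    have h1 : cd.dt (Θt μ) (g • ηt) = 1 := by
      rw [hμ, hdt_inv g (Θt ηt) ηt]; exact hone ηt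
    have hle1 : g • ηt ≤ μ := htri μ (g • ηt) (by rw [h1]; exact one_ne_zero)
    have h2 : cd.dt (Θt ηt) (g⁻¹ • μ) = 1 := by
      have h3 := hdt_inv g (Θt ηt) (g⁻¹ • μ)
      rw [smul_inv_smul, ← hμ, hone μ] at h3
      exact h3.symm
    have hle2 : g⁻¹ • μ ≤ ηt := htri ηt (g⁻¹ • μ) (by rw [h2]; exact one_ne_zero)
    have hle2' : μ ≤ g • ηt := by
      have h4 := (hle_inv g (g⁻¹ • μ) ηt).mpr hle2
      rwa [smul_inv_smul] at h4
    rw [← hμ]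
    exact congrArg Θt (le_antisymm hle2' hle1)
  have hstabΘ : ∀ ηt : Yt, MulAction.stabilizer Ahat ηt = MulAction.stabilizer Ahat (Θt ηt) := by
    intro ηt
    ext g
    simp only [MulAction.mem_stabilizer_iff]
    constructor
    · intro h; rw [hΘeq, h]
    · intro h
      have h5 := hΘeq g ηt
      rw [h] at h5
      exact hΘinj h5.symm
  choose χ0 hK hst using hrepl
  have hχ0 : ∀ μ : Yt, cd.dt (χ0 μ) μ = 1 ∧ (∀ ν, cd.dt (χ0 μ) ν ≠ 0 → ν ≤ μ) ∧
      (cd.rX (χ0 μ)).card = (cd.rY μ).card := by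
    intro μ
    obtain ⟨η, hη, hmax, h1, hcard⟩ := hK μ
    have heq : η = μ := hΘinj hη
    subst heq
    exact ⟨h1, fun ν hν => le_of_not_gt (hmax.2.1 ν hν), hcard⟩
  have hχ0stab : ∀ μ : Yt, MulAction.stabilizer Ahat μ = MulAction.stabilizer Ahat (χ0 μ) :=
    fun μ => (hstabΘ μ).trans (hst μ)
  have hrX_O : ∀ (o : Og) (χt : Xt),
      cd.rX (ιO o • χt) = (cd.rX χt).image (fun χ => o • χ) := by
    intro o χt
    have h := hrX_equiv 1 o χt
    rwa [map_one, one_mul] at h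
  have hrY_O : ∀ (o : Og) (ηt : Yt),
      cd.rY (ιO o • ηt) = (cd.rY ηt).image (fun η => o • η) := by
    intro o ηt
    have h := hrY_equiv 1 o ηt
    rwa [map_one, one_mul] at h
  have hcardX : ∀ (g : Ahat) (χt : Xt), (cd.rX (g • χt)).card = (cd.rX χt).card := by
    intro g χt
    obtain ⟨a, o, rfl⟩ := hgen g
    rw [hrX_equiv a o χt, Finset.card_image_of_injective _ (MulAction.injective o)]
  have hcardY : ∀ (g : Ahat) (ηt : Yt), (cd.rY (g • ηt)).card = (cd.rY ηt).card := by
    intro g ηt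
    obtain ⟨a, o, rfl⟩ := hgen g
    rw [hrY_equiv a o ηt, Finset.card_image_of_injective _ (MulAction.injective o)]
  -- construct the equivariant replacement map Φ
  obtain ⟨Φ, hΦeq, hΦ1, hΦ3, hΦ4⟩ :
      ∃ Φ : Yt → Xt, (∀ (g : Ahat) (ηt : Yt), Φ (g • ηt) = g • Φ ηt) ∧
        (∀ ηt, cd.dt (Φ ηt) ηt = 1) ∧
        (∀ ηt ν, cd.dt (Φ ηt) ν ≠ 0 → ν ≤ ηt) ∧
        (∀ ηt, (cd.rX (Φ ηt)).card = (cd.rY ηt).card) := by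
    obtain ⟨R, hR1, hR2⟩ :
        ∃ R : Yt → Yt, (∀ (g : Ahat) (ηt : Yt), R (g • ηt) = R ηt) ∧
          ∀ ηt, ∃ g : Ahat, g • R ηt = ηt := by
      refine ⟨fun ηt => (Quotient.mk (MulAction.orbitRel Ahat Yt) ηt).out, ?_, ?_⟩
      · intro g ηt
        have h : (Quotient.mk (MulAction.orbitRel Ahat Yt) (g • ηt))
            = Quotient.mk (MulAction.orbitRel Ahat Yt) ηt :=
          Quotient.sound ((MulAction.orbitRel_apply).mpr (MulAction.mem_orbit ηt g))
        exact congrArg Quotient.out h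
      · intro ηt
        have h := Quotient.mk_out (s := MulAction.orbitRel Ahat Yt) ηt
        rw [MulAction.orbitRel_apply, MulAction.mem_orbit_iff] at h
        obtain ⟨x, hx⟩ := h
        refine ⟨x⁻¹, ?_⟩
        beta_reduce
        rw [← hx, inv_smul_smul]
    choose gf hgf using hR2
    have hΦwd : ∀ (g : Ahat) (ηt : Yt), g • R ηt = ηt →
        g • χ0 (R ηt) = gf ηt • χ0 (R ηt) := by
      intro g ηt hgr
      have h1 : ((gf ηt)⁻¹ * g) • R ηt = R ηt := by
        rw [mul_smul, hgr, inv_smul_eq_iff]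
        exact (hgf ηt).symm
      have h2 : ((gf ηt)⁻¹ * g) ∈ MulAction.stabilizer Ahat (R ηt) :=
        MulAction.mem_stabilizer_iff.mpr h1
      rw [hχ0stab (R ηt)] at h2
      have h3 : ((gf ηt)⁻¹ * g) • χ0 (R ηt) = χ0 (R ηt) :=
        MulAction.mem_stabilizer_iff.mp h2
      calc g • χ0 (R ηt) = gf ηt • (((gf ηt)⁻¹ * g) • χ0 (R ηt)) := by
            rw [← mul_smul, mul_inv_cancel_left]
        _ = gf ηt • χ0 (R ηt) := by rw [h3]
    refine ⟨fun ηt => gf ηt • χ0 (R ηt), ?_, ?_, ?_, ?_⟩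
    · intro g ηt
      beta_reduce
      have h1 : (g * gf ηt) • R (g • ηt) = g • ηt := by rw [hR1, mul_smul, hgf]
      have h2 := hΦwd (g * gf ηt) (g • ηt) h1
      rw [← h2, hR1, mul_smul]
    · intro ηt
      beta_reduce
      have h := hdt_inv (gf ηt) (χ0 (R ηt)) (R ηt)
      rw [hgf ηt, (hχ0 (R ηt)).1] at h
      exact h
    · intro ηt ν hν
      beta_reduce at hν ⊢
      have h := hdt_inv (gf ηt) (χ0 (R ηt)) ((gf ηt)⁻¹ • ν)
      rw [smul_inv_smul] at h
      have h2 : (gf ηt)⁻¹ • ν ≤ R ηt := (hχ0 (R ηt)).2.1 _ (by rw [← h]; exact hν)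
      have h3 := (hle_inv (gf ηt) ((gf ηt)⁻¹ • ν) (R ηt)).mpr h2
      rwa [smul_inv_smul, hgf] at h3
    · intro ηt
      beta_reduce
      rw [hcardX, (hχ0 (R ηt)).2.2]
      conv_rhs => rw [← hgf ηt]
      exact (hcardY _ _).symm
  -- the minimal label map m
  obtain ⟨m, hmS, hm_min⟩ :
      ∃ m : Y → Yt, (∀ η, η ∈ cd.rY (m η)) ∧ ∀ η ηt, η ∈ cd.rY ηt → m η ≤ ηt := by
    have hSne : ∀ η : Y, (Finset.univ.filter fun ηt : Yt => η ∈ cd.rY ηt).Nonempty := by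
      intro η
      obtain ⟨ηt, h⟩ := cd.cover η
      exact ⟨ηt, Finset.mem_filter.mpr ⟨Finset.mem_univ _, h⟩⟩
    refine ⟨fun η => (Finset.univ.filter fun ηt : Yt => η ∈ cd.rY ηt).min' (hSne η), ?_, ?_⟩
    · intro η
      beta_reduce
      exact (Finset.mem_filter.mp (Finset.min'_mem _ (hSne η))).2
    · intro η ηt h
      beta_reduce
      exact Finset.min'_le (Finset.univ.filter fun μt : Yt => η ∈ cd.rY μt) ηt
        (Finset.mem_filter.mpr ⟨Finset.mem_univ _, h⟩)
  have hrYeq : ∀ ηt μt : Yt, (∃ x : Y, x ∈ cd.rY ηt ∧ x ∈ cd.rY μt) → cd.rY ηt = cd.rY μt := by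
    intro ηt μt h
    obtain ⟨a, ha⟩ := (cd.meet_iff ηt μt).mp h
    rw [← ha, cd.rY_smul]
  have hmconst : ∀ η η' : Y, η' ∈ cd.rY (m η) → m η' = m η := by
    intro η η' h
    have he : cd.rY (m η') = cd.rY (m η) := hrYeq _ _ ⟨η', hmS η', h⟩
    have heta : η ∈ cd.rY (m η') := by rw [he]; exact hmS η
    exact le_antisymm (hm_min η' _ h) (hm_min η _ heta)
  -- column sums are 1
  have hcol : ∀ η : Y, ∑ χ ∈ cd.rX (Φ (m η)), cd.d χ η = 1 := by
    intro η
    rw [cd.sum_d]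
    rw [Finset.sum_eq_single_of_mem (m η)
      (Finset.mem_filter.mpr ⟨Finset.mem_univ _, hmS η⟩)]
    · exact hΦ1 (m η)
    · intro b hb hbne
      by_contra hdt
      exact hbne (le_antisymm (hΦ3 _ _ hdt) (hm_min η b (Finset.mem_filter.mp hb).2))
  choose Θ hΘmem hΘone hΘzero using fun η : Y => sum_nat_eq_one (hcol η)
  have hΘuniq : ∀ (η : Y) (χ : X), χ ∈ cd.rX (Φ (m η)) → cd.d χ η ≠ 0 → χ = Θ η := by
    intro η χ hmem hne
    by_contra h
    exact hne (hΘzero η χ hmem h)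
  have hTY : ∀ (t : T) (ηt : Yt) (η' : Y), η' ∈ cd.rY ηt → t • η' ∈ cd.rY ηt := by
    intro t ηt η' h
    exact (cd.rY_orbit ηt η' h (t • η')).mpr ⟨t, rfl⟩
  have hTX : ∀ (t : T) (χt : Xt) (χ : X), χ ∈ cd.rX χt → t • χ ∈ cd.rX χt := by
    intro t χt χ h
    exact (cd.rX_orbit χt χ h (t • χ)).mpr ⟨t, rfl⟩
  have hmT : ∀ (t : T) (η : Y), m (t • η) = m η := by
    intro t η
    refine le_antisymm (hm_min _ _ (hTY t _ _ (hmS η))) (hm_min _ _ ?_)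
    have h := hTY t⁻¹ _ _ (hmS (t • η))
    rwa [inv_smul_smul] at h
  have hmO : ∀ (o : Og) (η : Y), m (o • η) = ιO o • m η := by
    intro o η
    refine le_antisymm (hm_min _ _ ?_) ?_
    · rw [hrY_O]
      exact Finset.mem_image.mpr ⟨η, hmS η, rfl⟩
    · have hmem : η ∈ cd.rY ((ιO o)⁻¹ • m (o • η)) := by
        rw [← map_inv, hrY_O]
        exact Finset.mem_image.mpr ⟨o • η, hmS (o • η), inv_smul_smul o η⟩
      have h2 := hm_min η _ hmem
      have h3 := (hle_inv (ιO o) (m η) ((ιO o)⁻¹ • m (o • η))).mpr h2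
      rwa [smul_inv_smul] at h3
  -- row sums are 1
  have hrow : ∀ (η : Y), ∀ χ ∈ cd.rX (Φ (m η)), ∑ η' ∈ cd.rY (m η), cd.d χ η' = 1 := by
    intro η χ hχ
    obtain ⟨χ₀, hχ₀⟩ := cd.rX_nonempty (Φ (m η))
    have hconst : ∀ χ' ∈ cd.rX (Φ (m η)),
        ∑ η' ∈ cd.rY (m η), cd.d χ' η' = ∑ η' ∈ cd.rY (m η), cd.d χ₀ η' := by
      intro χ' hχ'
      obtain ⟨t, ht⟩ := (cd.rX_orbit _ χ₀ hχ₀ χ').mp hχ'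
      subst ht
      refine Finset.sum_nbij' (fun η' => t⁻¹ • η') (fun η' => t • η')
        (fun a ha => hTY t⁻¹ _ _ ha) (fun a ha => hTY t _ _ ha)
        (fun a _ => smul_inv_smul t a) (fun a _ => inv_smul_smul t a) ?_
      intro a _
      have h := cd.d_inv t χ₀ (t⁻¹ • a)
      rw [smul_inv_smul] at h
      exact h
    have h2 : ∀ η' ∈ cd.rY (m η), ∑ χ' ∈ cd.rX (Φ (m η)), cd.d χ' η' = 1 := by
      intro η' hη'
      have h := hcol η'
      rwa [hmconst η η' hη'] at h
    have h1 : ∑ χ' ∈ cd.rX (Φ (m η)), ∑ η' ∈ cd.rY (m η), cd.d χ' η'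
        = (cd.rX (Φ (m η))).card * ∑ η' ∈ cd.rY (m η), cd.d χ₀ η' := by
      rw [Finset.sum_congr rfl hconst, Finset.sum_const, smul_eq_mul]
    have h3 : ∑ χ' ∈ cd.rX (Φ (m η)), ∑ η' ∈ cd.rY (m η), cd.d χ' η'
        = (cd.rY (m η)).card := by
      rw [Finset.sum_comm, Finset.sum_congr rfl h2, Finset.sum_const, smul_eq_mul, mul_one]
    have htot : (cd.rX (Φ (m η))).card * ∑ η' ∈ cd.rY (m η), cd.d χ₀ η'
        = (cd.rX (Φ (m η))).card := by
      rw [← h1, h3, hΦ4]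
    have hpos : 0 < (cd.rX (Φ (m η))).card :=
      Nat.pos_of_ne_zero (Finset.card_ne_zero_of_mem hχ₀)
    have hc1 : ∑ η' ∈ cd.rY (m η), cd.d χ₀ η' = 1 :=
      Nat.eq_of_mul_eq_mul_left hpos (by rw [htot, mul_one])
    rw [hconst χ hχ]
    exact hc1
  have hrowu : ∀ (η : Y), ∀ χ ∈ cd.rX (Φ (m η)), ∀ η₁ ∈ cd.rY (m η), ∀ η₂ ∈ cd.rY (m η),
      cd.d χ η₁ ≠ 0 → cd.d χ η₂ ≠ 0 → η₁ = η₂ := by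
    intro η χ hχ η₁ h1 η₂ h2 hd1 hd2
    obtain ⟨a, _, _, hz⟩ := sum_nat_eq_one (hrow η χ hχ)
    have e1 : η₁ = a := by by_contra h; exact hd1 (hz η₁ h1 h)
    have e2 : η₂ = a := by by_contra h; exact hd2 (hz η₂ h2 h)
    rw [e1, e2]
  have hmle : ∀ η η' : Y, cd.d (Θ η) η' ≠ 0 → m η' ≤ m η := by
    intro η η' hne
    have hs : ∑ χ ∈ cd.rX (Φ (m η)), cd.d χ η' ≠ 0 := by
      intro h0
      exact hne (Finset.sum_eq_zero_iff.mp h0 (Θ η) (hΘmem η))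
    rw [cd.sum_d] at hs
    obtain ⟨ηt, hηt, hdt⟩ : ∃ ηt ∈ Finset.univ.filter (fun ηt : Yt => η' ∈ cd.rY ηt),
        cd.dt (Φ (m η)) ηt ≠ 0 := by
      by_contra hc
      push_neg at hc
      exact hs (Finset.sum_eq_zero hc)
    exact le_trans (hm_min η' ηt (Finset.mem_filter.mp hηt).2) (hΦ3 _ _ hdt)
  have hsame : ∀ η η' : Y, cd.d (Θ η) η' ≠ 0 → m η' = m η → η' = η := by
    intro η η' hne hmm
    have h1 : η' ∈ cd.rY (m η) := by rw [← hmm]; exact hmS η'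
    exact hrowu η (Θ η) (hΘmem η) η' h1 η (hmS η) hne
      (by rw [hΘone η]; exact one_ne_zero)
  have hΘT : ∀ (t : T) (η : Y), Θ (t • η) = t • Θ η := by
    intro t η
    refine (hΘuniq (t • η) (t • Θ η) ?_ ?_).symm
    · rw [hmT]
      exact hTX t _ _ (hΘmem η)
    · rw [cd.d_inv, hΘone η]
      exact one_ne_zero
  have hΘO : ∀ (o : Og) (η : Y), Θ (o • η) = o • Θ η := by
    intro o η
    refine (hΘuniq (o • η) (o • Θ η) ?_ ?_).symm
    · rw [hmO, hΦeq, hrX_O]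
      exact Finset.mem_image.mpr ⟨Θ η, hΘmem η, rfl⟩
    · rw [hd_O, hΘone η]
      exact one_ne_zero
  have hΘinj' : Function.Injective Θ := by
    intro η η' hee
    have h1 : cd.d (Θ η) η' ≠ 0 := by rw [hee, hΘone]; exact one_ne_zero
    have h2 : cd.d (Θ η') η ≠ 0 := by rw [← hee, hΘone]; exact one_ne_zero
    have hm12 := le_antisymm (hmle η η' h1) (hmle η' η h2)
    exact (hsame η η' h1 hm12).symm
  refine ⟨fun η' η => η' = η ∨ m η' < m η, Θ, ?_, hΘinj', hΘT, hΘO, hΘone, ?_, ?_, ?_⟩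
  · exact { refl := fun a => Or.inl rfl
            trans := by
              rintro a b c (rfl | hab) hbc
              · exact hbc
              · rcases hbc with rfl | hbc
                · exact Or.inr hab
                · exact Or.inr (lt_trans hab hbc)
            antisymm := by
              rintro a b (rfl | hab) hba
              · rfl
              · rcases hba with rfl | hba
                · rfl
                · exact absurd (lt_trans hab hba) (lt_irrefl _) }
  · intro η η' hne
    rcases eq_or_lt_of_le (hmle η η' hne) with h | h
    · exact Or.inl (hsame η η' hne h)
    · exact Or.inr h
  · rintro t χ ⟨η, rfl⟩
    exact ⟨t • η, hΘT t η⟩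
  · rintro o χ ⟨η, rfl⟩
    exact ⟨o • η, hΘO o η⟩
end
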